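/- Let M be the Coxeter matrix of affine type G̃_2 on the index set {0,1,2}: the Coxeter graph is the path 0 — 1 — 2, where the edge {0,1} has label 6 and the edge {1,2} has label 3 (diagonal entries of M are 1, M 0 2 = M 2 0 = 2). Then every word in the generators with the intervening neighbours property is reduced. -/

import Mathlib

/-- A word `w` in the alphabet `B` has the *intervening neighbours* property with respect to
the Coxeter matrix `M` if any two occurrences of the same letter are separated by all of its
neighbours in the Coxeter graph of `M` (two distinct letters `s`, `t` being neighbours when
`M s t ≠ 2`). -/
def HasInterveningNeighbours {B : Type*} (M : CoxeterMatrix B) (w : List B) : Prop :=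
  ∀ (i j : ℕ) (hi : i < w.length) (hj : j < w.length), i < j →
    w.get ⟨i, hi⟩ = w.get ⟨j, hj⟩ →
    ∀ t : B, t ≠ w.get ⟨i, hi⟩ → M t (w.get ⟨i, hi⟩) ≠ 2 →
      ∃ (k : ℕ) (hk : k < w.length), i < k ∧ k < j ∧ w.get ⟨k, hk⟩ = t

/-- The Coxeter matrix of affine type G̃₂ on the index set `{0, 1, 2}`: the Coxeter graph is the path `0 — 1 — 2`, where the edge `{0, 1}` has label `6` and the edge `{1, 2}` has label `3`. -/
def CoxeterMatrixAffineG2 : CoxeterMatrix (Fin 3) where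
  M := Matrix.of fun i j : Fin 3 =>
    if i = j then 1
    else if min (i : ℕ) (j : ℕ) = 0 ∧ max (i : ℕ) (j : ℕ) = 1 then 6
    else if min (i : ℕ) (j : ℕ) = 1 ∧ max (i : ℕ) (j : ℕ) = 2 then 3
    else 2
  isSymm := by
    unfold Matrix.IsSymm
    ext i j
    simp only [Matrix.transpose_apply, Matrix.of_apply]
    rcases eq_or_ne i j with rfl | h
    · simp
    · rw [if_neg h.symm, if_neg h, min_comm, max_comm]
  diagonal := by intro i; simp
  off_diagonal := by
    intro i i' h
    simp only [Matrix.of_apply, if_neg h]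
    split_ifs <;> omega

/-!
If `s₁ ⋯ s_{k-1} (α_{s_k})` is a positive root for every `k`, the word `s₁ ⋯ sₙ` is reduced:
each letter then adds exactly one root to the inversion set, and an element has at most as many
inversions as its length.

For G̃₂ and a word with intervening neighbours, positivity is carried along a small automaton
whose state after a prefix records whether a `0`, resp. a `2`, occurs after the last `1`, and
whether `1` occurs at all. Each state comes with a union of some of the twelve families
`β + ℕ δ_β` into which the positive roots split; it contains the simple roots the property allows
next, and their reflections map the set of the next state into it.
-/

open Pointwise

namespace CoxeterSystem

variable {B W : Type*} [Group W] {M : CoxeterMatrix B}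

theorem simple_smul_simple_smul {V : Type*} [MulAction W V] (cs : CoxeterSystem M W) (i : B)
    (v : V) : cs.simple i • cs.simple i • v = v := by
  rw [smul_smul, cs.simple_mul_simple_self, one_smul]

structure PositiveSystem (cs : CoxeterSystem M W) (V : Type*) [AddGroup V]
    [DistribMulAction W V] where
  pos : Set V
  root : B → V
  root_mem : ∀ i, root i ∈ pos
  neg_notMem : ∀ v ∈ pos, -v ∉ pos
  simple_smul_root : ∀ i, cs.simple i • root i = -root i
  simple_smul_mem : ∀ i, ∀ v ∈ pos, v ≠ root i → cs.simple i • v ∈ pos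

namespace PositiveSystem

variable {V : Type*} [AddGroup V] [DistribMulAction W V] {cs : CoxeterSystem M W}
  (R : cs.PositiveSystem V)

def inversionSet (g : W) : Set V := {v ∈ R.pos | -(g • v) ∈ R.pos}

theorem inversionSet_one : R.inversionSet 1 = ∅ :=
  Set.eq_empty_of_forall_notMem fun v ⟨hv, hnv⟩ => R.neg_notMem v hv (by rwa [one_smul] at hnv)

theorem inversionSet_mul_simple_subset (g : W) (i : B) :
    R.inversionSet (g * cs.simple i) ⊆ insert (R.root i) (cs.simple i • R.inversionSet g) := by
  rintro v ⟨hv, hnv⟩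
  by_cases hvi : v = R.root i
  · exact Or.inl hvi
  exact Or.inr ⟨cs.simple i • v, ⟨R.simple_smul_mem i v hv hvi, by rwa [← mul_smul]⟩,
    cs.simple_smul_simple_smul i v⟩

theorem inversionSet_mul_simple_of_smul_root_mem {g : W} {i : B} (h : g • R.root i ∈ R.pos) :
    R.inversionSet (g * cs.simple i) = insert (R.root i) (cs.simple i • R.inversionSet g) := by
  refine (R.inversionSet_mul_simple_subset g i).antisymm (Set.insert_subset ?_ ?_)
  · refine ⟨R.root_mem i, ?_⟩
    rwa [mul_smul, R.simple_smul_root, smul_neg, neg_neg]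
  · rintro _ ⟨v, ⟨hv, hnv⟩, rfl⟩
    have hvi : v ≠ R.root i := fun hvi => R.neg_notMem _ h (hvi ▸ hnv)
    refine ⟨R.simple_smul_mem i v hv hvi, ?_⟩
    rwa [smul_smul, mul_assoc, cs.simple_mul_simple_self, mul_one]

theorem root_notMem_simple_smul_inversionSet (g : W) (i : B) :
    R.root i ∉ cs.simple i • R.inversionSet g := by
  rintro ⟨v, ⟨hv, -⟩, hvi⟩
  have : v = -R.root i := by
    rw [← R.simple_smul_root, ← hvi, cs.simple_smul_simple_smul]
  exact R.neg_notMem _ (R.root_mem i) (this ▸ hv)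

theorem encard_inversionSet_wordProd_le (ω : List B) :
    (R.inversionSet (cs.wordProd ω)).encard ≤ ω.length := by
  induction ω using List.reverseRecOn with
  | nil => simp [inversionSet_one]
  | append_singleton ω i ih =>
    rw [← List.concat_eq_append, wordProd_concat, List.length_concat, Nat.cast_succ]
    calc (R.inversionSet (cs.wordProd ω * cs.simple i)).encard
        ≤ (insert (R.root i) (cs.simple i • R.inversionSet (cs.wordProd ω))).encard :=
          Set.encard_le_encard (R.inversionSet_mul_simple_subset _ i)
      _ ≤ (R.inversionSet (cs.wordProd ω)).encard + 1 :=
          (Set.encard_insert_le _ _).trans_eq (by rw [Set.encard_smul_set])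
      _ ≤ ω.length + 1 := by gcongr

theorem encard_inversionSet_le_length (g : W) : (R.inversionSet g).encard ≤ cs.length g := by
  obtain ⟨ω, hω, rfl⟩ := cs.exists_isReduced g
  rw [hω.eq]
  exact R.encard_inversionSet_wordProd_le ω

theorem encard_inversionSet_wordProd_of_forall_prefix {ω : List B}
    (h : ∀ u i, u ++ [i] <+: ω → cs.wordProd u • R.root i ∈ R.pos) :
    (R.inversionSet (cs.wordProd ω)).encard = ω.length := by
  induction ω using List.reverseRecOn with
  | nil => simp [inversionSet_one]
  | append_singleton ω i ih =>
    rw [← List.concat_eq_append, wordProd_concat, List.length_concat, Nat.cast_succ,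
      R.inversionSet_mul_simple_of_smul_root_mem (h ω i (List.prefix_refl _)),
      Set.encard_insert_of_notMem (R.root_notMem_simple_smul_inversionSet _ i),
      Set.encard_smul_set, ih fun u j hu => h u j (hu.trans (List.prefix_append _ _))]

theorem isReduced_of_forall_prefix {ω : List B}
    (h : ∀ u i, u ++ [i] <+: ω → cs.wordProd u • R.root i ∈ R.pos) : cs.IsReduced ω := by
  refine (cs.length_wordProd_le ω).antisymm ?_
  have := R.encard_inversionSet_le_length (cs.wordProd ω)
  rw [R.encard_inversionSet_wordProd_of_forall_prefix h] at this
  exact_mod_cast this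

end PositiveSystem

end CoxeterSystem

section Words

variable {B : Type*}

def OccursUnfollowedBy (a b : B) (u : List B) : Prop := ∃ p q, u = p ++ a :: q ∧ b ∉ q

theorem occursUnfollowedBy_append_singleton {a b t : B} {u : List B} :
    OccursUnfollowedBy a b (u ++ [t]) ↔ t = a ∨ t ≠ b ∧ OccursUnfollowedBy a b u := by
  constructor
  · rintro ⟨p, q, hu, hq⟩
    rcases q.eq_nil_or_concat with rfl | ⟨q, x, rfl⟩
    · simp_all
    · rw [List.concat_eq_append, ← List.cons_append, ← List.append_assoc] at hu
      obtain ⟨rfl, htx⟩ := List.append_inj' hu rfl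
      obtain rfl : t = x := List.singleton_inj.mp htx
      simp only [List.concat_eq_append, List.mem_append, List.mem_singleton, not_or] at hq
      exact Or.inr ⟨Ne.symm hq.2, p, q, rfl, hq.1⟩
  · rintro (rfl | ⟨htb, p, q, rfl, hq⟩)
    · exact ⟨u, [], rfl, List.not_mem_nil⟩
    · exact ⟨p, q ++ [t], by simp, by simp [hq, htb.symm]⟩

theorem OccursUnfollowedBy.of_mem {a b : B} {p q : List B} (ha : a ∈ q) (hb : b ∉ q) :
    OccursUnfollowedBy a b (p ++ q) := by
  obtain ⟨q₁, q₂, rfl⟩ := List.append_of_mem ha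
  exact ⟨p ++ q₁, q₂, by simp, fun h => hb (by simp [h])⟩

variable {M : CoxeterMatrix B} {a t : B}

theorem HasInterveningNeighbours.mem_of_eq_append {p q r : List B}
    (h : HasInterveningNeighbours M (p ++ a :: q ++ a :: r)) (ht : t ≠ a) (hM : M t a ≠ 2) :
    t ∈ q := by
  have hi : p.length < (p ++ a :: q ++ a :: r).length := by simp
  have hj : p.length + (q.length + 1) < (p ++ a :: q ++ a :: r).length := by simp
  have hwi : (p ++ a :: q ++ a :: r)[p.length] = a := by simp
  have hwj : (p ++ a :: q ++ a :: r)[p.length + (q.length + 1)] = a := by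
    simp [List.getElem_append_right]
  obtain ⟨k, hk, hik, hkj, hkt⟩ := h _ _ hi hj (by omega)
    (by simp only [List.get_eq_getElem, hwi, hwj]) t (by simpa [hwi] using ht)
    (by simpa [hwi] using hM)
  obtain ⟨n, rfl⟩ : ∃ n, k = p.length + (n + 1) := ⟨k - p.length - 1, by omega⟩
  have hn : n < q.length := by omega
  rw [List.mem_iff_getElem]
  refine ⟨n, hn, ?_⟩
  rw [← hkt]
  simp [List.getElem_append_right, List.getElem_append_left, hn]

theorem HasInterveningNeighbours.not_occursUnfollowedBy {u r : List B}
    (h : HasInterveningNeighbours M (u ++ a :: r)) (ht : t ≠ a) (hM : M t a ≠ 2) :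
    ¬OccursUnfollowedBy a t u := by
  rintro ⟨p, q, rfl, hq⟩
  exact hq (HasInterveningNeighbours.mem_of_eq_append (by simpa using h) ht hM)

theorem HasInterveningNeighbours.occursUnfollowedBy {u r : List B}
    (h : HasInterveningNeighbours M (u ++ a :: r)) (ha : OccursUnfollowedBy a a u) (ht : t ≠ a)
    (hM : M t a ≠ 2) : OccursUnfollowedBy t a u := by
  obtain ⟨p, q, rfl, hq⟩ := ha
  simpa using OccursUnfollowedBy.of_mem (p := p ++ [a])
    (HasInterveningNeighbours.mem_of_eq_append (by simpa using h) ht hM) hq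

end Words

namespace AffineG2

open Matrix Zsqrtd

instance : Nonsquare 3 :=
  ⟨by rintro (_ | _ | n) <;> simp; nlinarith⟩

abbrev K : Type := ℤ√((3 : ℕ) : ℤ)

abbrev V : Type := Fin 3 → K

/-- Matrices, in the basis of simple roots, of `v ↦ v - 2 B(α_t, v) α_t` with
`2 B(α_s, α_t) = -2 cos (π / m_st)`, that is `-√3` for `m_st = 6` and `-1` for `m_st = 3`. -/
def reflection : Fin 3 → Matrix (Fin 3) (Fin 3) K :=
  ![!![-1, sqrtd, 0; 0, 1, 0; 0, 0, 1],
    !![1, 0, 0; sqrtd, -1, 1; 0, 0, 1],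
    !![1, 0, 0; 0, 1, 0; 0, 1, -1]]

theorem isLiftable_reflection : CoxeterMatrixAffineG2.IsLiftable reflection := by
  unfold CoxeterMatrix.IsLiftable
  decide

noncomputable def geometricRepresentation : CoxeterMatrixAffineG2.Group →* Module.End K V :=
  (Matrix.toLinAlgEquiv' : Matrix (Fin 3) (Fin 3) K ≃ₐ[K] _).toRingEquiv.toMonoidHom.comp
    (CoxeterMatrixAffineG2.toCoxeterSystem.lift ⟨reflection, isLiftable_reflection⟩)

noncomputable instance : DistribMulAction CoxeterMatrixAffineG2.Group V :=
  DistribMulAction.compHom V geometricRepresentation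

theorem simple_smul (t : Fin 3) (v : V) :
    CoxeterMatrixAffineG2.toCoxeterSystem.simple t • v = reflection t *ᵥ v := by
  change geometricRepresentation (CoxeterMatrixAffineG2.toCoxeterSystem.simple t) v = _
  rw [geometricRepresentation, MonoidHom.comp_apply, CoxeterSystem.lift_apply_simple]
  rfl

def imaginaryRoot : V := ![sqrtd, 2, 1]

/-- The positive roots are the vectors `minimalRoot i + k • period i`, `k : ℕ`; the first six
families lie in the orbit of `α₁` and `α₂`, the last six in that of `α₀`. -/
def minimalRoot : Fin 12 → V :=
  ![![0, 0, 1], ![0, 1, 0], ![0, 1, 1], ![sqrtd, 1, 0], ![sqrtd, 1, 1], ![sqrtd, 2, 0],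
    ![1, 0, 0], ![1, sqrtd, 0], ![1, sqrtd, sqrtd], ![2, sqrtd, 0], ![2, sqrtd, sqrtd],
    ![2, 2 * sqrtd, sqrtd]]

def period (i : Fin 12) : V := if (i : ℕ) < 6 then imaginaryRoot else (sqrtd : K) • imaginaryRoot

def rootsOf (l : List (Fin 12)) : Set V :=
  {v | ∃ i ∈ l, ∃ k : ℕ, v = minimalRoot i + k • period i}

def posRoots : Set V := rootsOf (List.finRange 12)

theorem exists_minimalRoot_eq_single : ∀ t, ∃ i, minimalRoot i = Pi.single t 1 := by decide

theorem reflection_mulVec_period : ∀ t i, reflection t *ᵥ period i = period i := by decide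

theorem reflection_mulVec_single : ∀ t, reflection t *ᵥ Pi.single t 1 = -Pi.single t 1 := by
  decide

theorem reflection_mulVec_minimalRoot : ∀ t i, minimalRoot i = Pi.single t 1 ∨
    ∃ j, ∃ q : Fin 2, reflection t *ᵥ minimalRoot i = minimalRoot j + (q : ℕ) • period j ∧
      period j = period i := by
  decide

theorem period_sub_single : ∀ t i, minimalRoot i = Pi.single t 1 →
    ∃ j, period i - Pi.single t 1 = minimalRoot j ∧ period j = period i := by
  decide

theorem height_minimalRoot_pos :
    ∀ i, 0 < minimalRoot i 0 + minimalRoot i 1 + minimalRoot i 2 := by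
  decide

theorem height_period_nonneg : ∀ i, 0 ≤ period i 0 + period i 1 + period i 2 := by decide

theorem reflection_mulVec_translate {t : Fin 3} {i j : Fin 12} {q : ℕ}
    (h : reflection t *ᵥ minimalRoot i = minimalRoot j + q • period j) (hij : period j = period i)
    (k : ℕ) :
    reflection t *ᵥ (minimalRoot i + k • period i) = minimalRoot j + (q + k) • period j := by
  rw [mulVec_add, mulVec_smul, reflection_mulVec_period, h, hij, add_smul, add_assoc]

theorem height_pos_of_mem_posRoots {v : V} (hv : v ∈ posRoots) : 0 < v 0 + v 1 + v 2 := by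
  obtain ⟨i, -, k, rfl⟩ := hv
  have := height_minimalRoot_pos i
  have := height_period_nonneg i
  simp only [Pi.add_apply, Pi.smul_apply]
  simp only [nsmul_eq_mul]
  nlinarith [(Nat.cast_nonneg k : (0 : K) ≤ k)]

theorem reflection_mulVec_mem_posRoots (t : Fin 3) {v : V} (hv : v ∈ posRoots)
    (hvt : v ≠ Pi.single t 1) : reflection t *ᵥ v ∈ posRoots := by
  obtain ⟨i, -, k, rfl⟩ := hv
  rcases reflection_mulVec_minimalRoot t i with hit | ⟨j, q, h, hij⟩
  · obtain ⟨k, rfl⟩ : ∃ k', k = k' + 1 :=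
      Nat.exists_eq_succ_of_ne_zero fun hk => hvt (by simp [hk, hit])
    obtain ⟨j, hj, hij⟩ := period_sub_single t i hit
    refine ⟨j, List.mem_finRange j, k, ?_⟩
    rw [mulVec_add, mulVec_smul, reflection_mulVec_period, hit, reflection_mulVec_single, ← hj,
      hij, add_nsmul, one_nsmul]
    abel
  · exact ⟨j, List.mem_finRange j, q + k, reflection_mulVec_translate h hij k⟩

noncomputable def positiveSystem :
    CoxeterMatrixAffineG2.toCoxeterSystem.PositiveSystem V where
  pos := posRoots
  root t := Pi.single t 1
  root_mem t :=
    have ⟨i, hi⟩ := exists_minimalRoot_eq_single t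
    ⟨i, List.mem_finRange i, 0, by simp [hi]⟩
  neg_notMem v hv hnv := by
    have := height_pos_of_mem_posRoots hv
    have := height_pos_of_mem_posRoots hnv
    simp only [Pi.neg_apply] at this
    linarith
  simple_smul_root t := by rw [simple_smul, reflection_mulVec_single]
  simple_smul_mem t v hv hvt := by
    rw [simple_smul]
    exact reflection_mulVec_mem_posRoots t hv hvt

abbrev State : Type := Bool × Bool × Bool

open Classical in
noncomputable def state (u : List (Fin 3)) : State :=
  (OccursUnfollowedBy 0 1 u, OccursUnfollowedBy 2 1 u, OccursUnfollowedBy 1 1 u)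

def step (s : State) (t : Fin 3) : State :=
  if t = 0 then (true, s.2.1, s.2.2)
  else if t = 2 then (s.1, true, s.2.2)
  else (false, false, true)

def allowed (s : State) (t : Fin 3) : Bool :=
  if t = 0 then !s.1
  else if t = 2 then !s.2.1
  else !s.2.2 || (s.1 && s.2.1)

def family : State → List (Fin 12)
  | (false, false, false) => List.finRange 12
  | (false, false, true) => [0, 3, 4, 6, 10]
  | (false, true, false) => [1, 2, 3, 4, 5, 6, 7, 9, 11]
  | (false, true, true) => [3, 4, 5, 6, 9]
  | (true, false, false) => [0, 1, 2, 5, 7, 8, 11]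
  | (true, false, true) => [0, 1, 2, 8, 11]
  | (true, true, false) => [1, 2, 5, 7, 11]
  | (true, true, true) => [1, 2, 5, 7, 11]

theorem exists_minimalRoot_eq_single_mem_family : ∀ s t, allowed s t = true →
    ∃ i ∈ family s, minimalRoot i = Pi.single t 1 := by
  decide

theorem reflection_mulVec_minimalRoot_mem_family : ∀ s t, allowed s t = true →
    ∀ i ∈ family (step s t), ∃ j ∈ family s, ∃ q : Fin 2,
      reflection t *ᵥ minimalRoot i = minimalRoot j + (q : ℕ) • period j ∧
        period j = period i := by
  decide

theorem single_mem_rootsOf_family {s : State} {t : Fin 3} (h : allowed s t = true) :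
    Pi.single t 1 ∈ rootsOf (family s) :=
  have ⟨i, hi, hit⟩ := exists_minimalRoot_eq_single_mem_family s t h
  ⟨i, hi, 0, by simp [hit]⟩

theorem simple_smul_mem_rootsOf_family {s : State} {t : Fin 3} (h : allowed s t = true) {v : V}
    (hv : v ∈ rootsOf (family (step s t))) :
    CoxeterMatrixAffineG2.toCoxeterSystem.simple t • v ∈ rootsOf (family s) := by
  obtain ⟨i, hi, k, rfl⟩ := hv
  obtain ⟨j, hj, q, hq, hij⟩ := reflection_mulVec_minimalRoot_mem_family s t h i hi
  exact ⟨j, hj, q + k, by rw [simple_smul, reflection_mulVec_translate hq hij]⟩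

theorem state_nil : state [] = (false, false, false) := by
  simp [state, OccursUnfollowedBy]

theorem state_append_singleton (u : List (Fin 3)) (t : Fin 3) :
    state (u ++ [t]) = step (state u) t := by
  fin_cases t <;> simp [state, step, occursUnfollowedBy_append_singleton]

theorem allowed_state {u r : List (Fin 3)} {t : Fin 3}
    (h : HasInterveningNeighbours CoxeterMatrixAffineG2 (u ++ t :: r)) :
    allowed (state u) t = true := by
  fin_cases t
  · simpa [allowed, state] using h.not_occursUnfollowedBy (t := 1) (by decide) (by decide)
  · suffices OccursUnfollowedBy 1 1 u → OccursUnfollowedBy 0 1 u ∧ OccursUnfollowedBy 2 1 u by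
      simpa [allowed, state, imp_iff_not_or] using this
    exact fun h1 => ⟨h.occursUnfollowedBy h1 (by decide) (by decide),
      h.occursUnfollowedBy h1 (by decide) (by decide)⟩
  · simpa [allowed, state] using h.not_occursUnfollowedBy (t := 1) (by decide) (by decide)

theorem wordProd_smul_single_mem_rootsOf_family {x y r : List (Fin 3)} {t : Fin 3}
    (h : HasInterveningNeighbours CoxeterMatrixAffineG2 (x ++ y ++ t :: r)) :
    CoxeterMatrixAffineG2.toCoxeterSystem.wordProd y • Pi.single t 1 ∈
      rootsOf (family (state x)) := by
  induction y generalizing x with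
  | nil =>
    rw [CoxeterSystem.wordProd_nil, one_smul]
    exact single_mem_rootsOf_family (allowed_state (by simpa using h))
  | cons a y ih =>
    rw [CoxeterSystem.wordProd_cons, mul_smul]
    refine simple_smul_mem_rootsOf_family (allowed_state (r := y ++ t :: r) (by simpa using h)) ?_
    rw [← state_append_singleton]
    exact ih (by simpa using h)

end AffineG2

/-- In the affine Coxeter group defined by this matrix, every word with the intervening
neighbours property is reduced. -/
theorem intervening_neighbours_reduced_CoxeterMatrixAffineG2
    (w : List (Fin 3)) (hw : HasInterveningNeighbours (CoxeterMatrixAffineG2) w) :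
    (CoxeterMatrixAffineG2).toCoxeterSystem.IsReduced w :=
  AffineG2.positiveSystem.isReduced_of_forall_prefix fun u t ⟨r, hr⟩ => by
    have h := AffineG2.wordProd_smul_single_mem_rootsOf_family (x := []) (by simpa [← hr] using hw)
    rwa [AffineG2.state_nil] at h
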